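/- Let P be a homogeneous ideal of ℂ[[s_1,...,s_h]] and m ∈ ℂ[[s]] a homogeneous element. Then (m ⋆ P^⊥)^⊥ = P : m (the colon ideal), and m ⋆ P^⊥ = (P : m)^⊥. -/

import Mathlib

noncomputable section
open MvPolynomial

/-- multi-factorial α! = ∏ αᵢ! -/
def mfact {σ : Type*} [Fintype σ] (α : σ →₀ ℕ) : ℕ := ∏ i, (α i).factorial

/-- the pairing (q,p) = (q(∂ₛ) • p)|₍ₛ₌₀₎ = ∑_α q_α · α! · p_α -/
def pairing {h : ℕ} (q : MvPolynomial (Fin h) ℂ) (p : MvPowerSeries (Fin h) ℂ) : ℂ :=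
  ∑ α ∈ q.support, q.coeff α * (mfact α : ℂ) * MvPowerSeries.coeff α p

/-- the star operation m ⋆ q = ∑_α m_α ∑_β q_β (β!/(β-α)!) ∂^(β-α) -/
def starOp {h : ℕ} (m : MvPowerSeries (Fin h) ℂ) (q : MvPolynomial (Fin h) ℂ) :
    MvPolynomial (Fin h) ℂ :=
  ∑ β ∈ q.support, ∑ α ∈ Finset.Iic β,
    MvPolynomial.monomial (β - α)
      (q.coeff β * MvPowerSeries.coeff α m * ((mfact β : ℂ) / (mfact (β - α) : ℂ)))

/-- P^⊥ for a set of power series -/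
def perpOfPS {h : ℕ} (P : Set (MvPowerSeries (Fin h) ℂ)) : Set (MvPolynomial (Fin h) ℂ) :=
  {q | ∀ p ∈ P, pairing q p = 0}

/-- Q^⊥ for a set of polynomials -/
def perpOfPoly {h : ℕ} (Q : Set (MvPolynomial (Fin h) ℂ)) : Set (MvPowerSeries (Fin h) ℂ) :=
  {p | ∀ q ∈ Q, pairing q p = 0}

/-! The pairing is diagonal in the monomial basis with nonzero weights `α!`, so on the
finite-dimensional space `H_k` of homogeneous polynomials of degree `k` it is a nondegenerate
symmetric form, and `P^⊥` is assembled degreewise from the orthogonals of the slices `P ∩ H_k`.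
By the adjunction `(m ⋆ q, p) = (q, m p)`, `m ⋆ -` is the adjoint of multiplication by `m`,
which maps `H_e` to `H_{e+d}`. In each degree the two identities are then linear algebra:
`(U^⊥)^⊥ = U`, and an adjoint maps `U^⊥` onto the orthogonal of the preimage of `U`.
Passing back from the slices to `P` needs that a power series whose homogeneous components
all lie in `P` lies in `P`: by Hilbert's basis theorem these components are combinations of
finitely many homogeneous `g ∈ P`, and collecting the coefficients degreewise writes the series
as `∑ C_g g`. -/

namespace LinearMap.BilinForm

variable {K V W : Type*} [Field K] [AddCommGroup V] [Module K V] [FiniteDimensional K V]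
  [AddCommGroup W] [Module K W] [FiniteDimensional K W]

theorem orthogonal_comap_eq_map_orthogonal {BV : LinearMap.BilinForm K V}
    {BW : LinearMap.BilinForm K W} (hBV : BV.Nondegenerate) (hBV' : BV.IsRefl)
    (hBW : BW.Nondegenerate) (hBW' : BW.IsRefl)
    {f : V →ₗ[K] W} {T : W →ₗ[K] V} (hfT : ∀ w v, BV (T w) v = BW w (f v))
    (U : Submodule K W) :
    BV.orthogonal (U.comap f) = (BW.orthogonal U).map T := by
  rw [← BV.orthogonal_orthogonal hBV hBV' ((BW.orthogonal U).map T)]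
  congr 1
  ext v
  simp only [mem_orthogonal_iff, Submodule.mem_map, forall_exists_index, and_imp,
    forall_apply_eq_imp_iff₂, hfT, Submodule.mem_comap]
  exact (SetLike.ext_iff.mp (BW.orthogonal_orthogonal hBW hBW' U) (f v)).symm

end LinearMap.BilinForm

namespace MvPowerSeries

variable {σ R : Type*}

def IsHomogeneousIdeal [Semiring R] (P : Ideal (MvPowerSeries σ R)) : Prop :=
  ∀ p ∈ P, ∀ k, homogeneousComponent k p ∈ P

theorem coe_homogeneousComponent_truncTotal [Finite σ] [CommSemiring R] (k : ℕ)
    (p : MvPowerSeries σ R) :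
    (MvPolynomial.homogeneousComponent k (truncTotal (k + 1) p) : MvPowerSeries σ R) =
      homogeneousComponent k p := by
  ext α
  rw [MvPolynomial.coeff_coe, MvPolynomial.coeff_homogeneousComponent, coeff_truncTotal_eq_ite,
    coeff_homogeneousComponent]
  split_ifs <;> first | rfl | omega

theorem homogeneousComponent_add_mul_of_isHomogeneous [CommSemiring R] {m : MvPowerSeries σ R}
    {d : ℕ} (hm : m.IsHomogeneous d) (k : ℕ) (p : MvPowerSeries σ R) :
    homogeneousComponent (k + d) (m * p) = m * homogeneousComponent k p := by
  classical
  ext γ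
  rw [coeff_homogeneousComponent, coeff_mul, coeff_mul]
  split_ifs with hγ
  · refine Finset.sum_congr rfl fun x hx => ?_
    rw [Finset.HasAntidiagonal.mem_antidiagonal] at hx
    by_cases hx₁ : x.1.degree = d
    · rw [coeff_homogeneousComponent, if_pos (by rw [← hx, map_add] at hγ; omega)]
    · rw [hm.coeff_eq_zero hx₁, zero_mul, zero_mul]
  · refine (Finset.sum_eq_zero fun x hx => ?_).symm
    rw [Finset.HasAntidiagonal.mem_antidiagonal] at hx
    rw [coeff_homogeneousComponent]
    split_ifs with hx₂
    · rw [hm.coeff_eq_zero (by rw [← hx, map_add] at hγ; omega), zero_mul]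
    · rw [mul_zero]

theorem coeff_mul_coe_of_isHomogeneous [CommSemiring R] {g : MvPolynomial σ R} {d : ℕ}
    (hg : g.IsHomogeneous d) {C : MvPowerSeries σ R} {c : ℕ → MvPolynomial σ R}
    (hC : ∀ α, coeff α C = (c (α.degree + d)).coeff α) (γ : σ →₀ ℕ) :
    coeff γ (C * (g : MvPowerSeries σ R)) = (c γ.degree * g).coeff γ := by
  classical
  rw [coeff_mul, MvPolynomial.coeff_mul]
  refine Finset.sum_congr rfl fun x hx => ?_
  rw [Finset.HasAntidiagonal.mem_antidiagonal] at hx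
  by_cases hx₂ : x.2.degree = d
  · rw [MvPolynomial.coeff_coe, hC, ← hx, map_add, hx₂]
  · rw [MvPolynomial.coeff_coe, hg.coeff_eq_zero hx₂, mul_zero, mul_zero]

theorem mem_of_forall_homogeneousComponent_mem [Finite σ] [CommRing R] [IsNoetherianRing R]
    {P : Ideal (MvPowerSeries σ R)} {p : MvPowerSeries σ R}
    (hp : ∀ k, homogeneousComponent k p ∈ P) : p ∈ P := by
  classical
  set G : Set (MvPolynomial σ R) :=
    {g | (∃ d, g.IsHomogeneous d) ∧ (g : MvPowerSeries σ R) ∈ P}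
  obtain ⟨F, hFG, hspan⟩ :=
    (Submodule.fg_span_iff_fg_span_finset_subset (R := MvPolynomial σ R) G).mp
      (IsNoetherian.noetherian _)
  have hcomb : ∀ k, ∃ c : MvPolynomial σ R → MvPolynomial σ R,
      ∑ g ∈ F, c g * g = MvPolynomial.homogeneousComponent k (truncTotal (k + 1) p) := by
    intro k
    have hG : MvPolynomial.homogeneousComponent k (truncTotal (k + 1) p) ∈ G :=
      ⟨⟨k, MvPolynomial.homogeneousComponent_isHomogeneous _ _⟩,
        by rw [coe_homogeneousComponent_truncTotal]; exact hp k⟩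
    obtain ⟨c, -, hc⟩ := Submodule.mem_span_finset.mp (hspan ▸ Submodule.subset_span hG)
    exact ⟨c, by simpa only [smul_eq_mul] using hc⟩
  choose c hc using hcomb
  choose! d hd using fun g (hg : g ∈ G) => hg.1
  -- `C g` collects, degree by degree, the coefficients of `g` in the components of `p`.
  set C : MvPolynomial σ R → MvPowerSeries σ R := fun g α => (c (α.degree + d g) g).coeff α
  have hp_eq : p = ∑ g ∈ F, C g * (g : MvPowerSeries σ R) := by
    ext γ
    rw [map_sum, Finset.sum_congr rfl fun g hg =>
      coeff_mul_coe_of_isHomogeneous (hd g (hFG hg)) (C := C g) (c := (c · g)) (fun _ => rfl) γ,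
      ← MvPolynomial.coeff_sum, hc, ← MvPolynomial.coeff_coe,
      coe_homogeneousComponent_truncTotal, coeff_homogeneousComponent, if_pos rfl]
  rw [hp_eq]
  exact Ideal.sum_mem _ fun g hg => Ideal.mul_mem_left _ _ (hFG hg).2

end MvPowerSeries

theorem mfact_ne_zero {σ : Type*} [Fintype σ] (α : σ →₀ ℕ) : mfact α ≠ 0 :=
  Finset.prod_ne_zero_iff.mpr fun _ _ => Nat.factorial_ne_zero _

open Finset in
theorem Finsupp.sum_antidiagonal_eq_sum_Iic {σ M : Type*} [AddCommMonoid M] [DecidableEq σ]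
    (f : (σ →₀ ℕ) → (σ →₀ ℕ) → M) (n : σ →₀ ℕ) :
    ∑ x ∈ antidiagonal n, f x.1 x.2 = ∑ a ∈ Iic n, f a (n - a) := by
  refine sum_nbij' Prod.fst (fun a => (a, n - a)) ?_ ?_ ?_ (fun _ _ => rfl) ?_
  · rintro ⟨a, b⟩ hab
    exact mem_Iic.mpr (HasAntidiagonal.mem_antidiagonal.mp hab ▸ le_self_add)
  · exact fun a ha => HasAntidiagonal.mem_antidiagonal.mpr (add_tsub_cancel_of_le (mem_Iic.mp ha))
  · rintro ⟨a, b⟩ hab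
    rw [← HasAntidiagonal.mem_antidiagonal.mp hab, add_tsub_cancel_left]
  · rintro ⟨a, b⟩ hab
    rw [← HasAntidiagonal.mem_antidiagonal.mp hab, add_tsub_cancel_left]

section Pairing

variable {h : ℕ}

theorem pairing_eq_sum_of_support_subset {q : MvPolynomial (Fin h) ℂ} {S : Finset (Fin h →₀ ℕ)}
    (hS : q.support ⊆ S) (p : MvPowerSeries (Fin h) ℂ) :
    pairing q p = ∑ α ∈ S, q.coeff α * (mfact α : ℂ) * MvPowerSeries.coeff α p :=
  Finset.sum_subset hS fun α _ hα => by rw [notMem_support_iff.mp hα, zero_mul, zero_mul]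

variable (h) in
def pairingBilin : MvPolynomial (Fin h) ℂ →ₗ[ℂ] MvPowerSeries (Fin h) ℂ →ₗ[ℂ] ℂ :=
  LinearMap.mk₂ ℂ pairing
    (fun a b p => by
      classical
      have hS := support_add (p := a) (q := b)
      rw [pairing_eq_sum_of_support_subset hS, pairing_eq_sum_of_support_subset
        Finset.subset_union_left, pairing_eq_sum_of_support_subset Finset.subset_union_right,
        ← Finset.sum_add_distrib]
      simp only [coeff_add, add_mul])
    (fun c a p => by
      rw [pairing_eq_sum_of_support_subset support_smul, smul_eq_mul, pairing, Finset.mul_sum]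
      simp only [coeff_smul, smul_eq_mul, mul_assoc])
    (fun q p₁ p₂ => by simp only [pairing, map_add, mul_add, Finset.sum_add_distrib])
    (fun c q p => by simp only [pairing, map_smul, smul_eq_mul, Finset.mul_sum, mul_left_comm])

@[simp]
theorem pairingBilin_apply (q : MvPolynomial (Fin h) ℂ) (p : MvPowerSeries (Fin h) ℂ) :
    pairingBilin h q p = pairing q p := rfl

theorem pairing_add_left (a b : MvPolynomial (Fin h) ℂ) (p : MvPowerSeries (Fin h) ℂ) :
    pairing (a + b) p = pairing a p + pairing b p :=
  (pairingBilin h).map_add₂ a b p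

theorem pairing_smul_left (c : ℂ) (a : MvPolynomial (Fin h) ℂ) (p : MvPowerSeries (Fin h) ℂ) :
    pairing (c • a) p = c • pairing a p :=
  (pairingBilin h).map_smul₂ c a p

theorem pairing_sum_left {ι : Type*} (s : Finset ι) (f : ι → MvPolynomial (Fin h) ℂ)
    (p : MvPowerSeries (Fin h) ℂ) :
    pairing (∑ i ∈ s, f i) p = ∑ i ∈ s, pairing (f i) p :=
  (pairingBilin h).map_sum₂ s f p

theorem pairing_monomial_left (γ : Fin h →₀ ℕ) (c : ℂ) (p : MvPowerSeries (Fin h) ℂ) :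
    pairing (monomial γ c) p = c * mfact γ * MvPowerSeries.coeff γ p := by
  classical
  rw [pairing_eq_sum_of_support_subset support_monomial_subset, Finset.sum_singleton,
    coeff_monomial, if_pos rfl]

theorem pairing_monomial_right (q : MvPolynomial (Fin h) ℂ) (α : Fin h →₀ ℕ) :
    pairing q (MvPowerSeries.monomial α 1) = q.coeff α * mfact α := by
  classical
  rw [pairing_eq_sum_of_support_subset (Finset.subset_insert α q.support)]
  simp [MvPowerSeries.coeff_monomial]

theorem eq_of_forall_pairing_eq {a b : MvPolynomial (Fin h) ℂ}
    (hab : ∀ p, pairing a p = pairing b p) : a = b := by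
  ext α
  simpa [pairing_monomial_right, mfact_ne_zero] using hab (MvPowerSeries.monomial α 1)

theorem pairing_coe_comm (q r : MvPolynomial (Fin h) ℂ) : pairing q r = pairing r q := by
  classical
  rw [pairing_eq_sum_of_support_subset (Finset.subset_union_left (s₂ := r.support)),
    pairing_eq_sum_of_support_subset (Finset.subset_union_right (s₁ := q.support))]
  simp only [coeff_coe]
  exact Finset.sum_congr rfl fun α _ => by ring

theorem pairing_starOp (m : MvPowerSeries (Fin h) ℂ) (q : MvPolynomial (Fin h) ℂ)
    (p : MvPowerSeries (Fin h) ℂ) :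
    pairing (starOp m q) p = pairing q (m * p) := by
  classical
  rw [starOp, pairing_sum_left, pairing]
  refine Finset.sum_congr rfl fun β _ => ?_
  rw [pairing_sum_left, MvPowerSeries.coeff_mul, Finsupp.sum_antidiagonal_eq_sum_Iic
    (fun a b => MvPowerSeries.coeff a m * MvPowerSeries.coeff b p), Finset.mul_sum]
  refine Finset.sum_congr rfl fun α _ => ?_
  rw [pairing_monomial_left]
  have := Nat.cast_ne_zero (R := ℂ) |>.mpr (mfact_ne_zero (β - α))
  field_simp

theorem pairing_starOp_eq_zero {P : Set (MvPowerSeries (Fin h) ℂ)}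
    {m p : MvPowerSeries (Fin h) ℂ} {q : MvPolynomial (Fin h) ℂ} (hq : q ∈ perpOfPS P)
    (hp : m * p ∈ P) : pairing (starOp m q) p = 0 := by
  rw [pairing_starOp]
  exact hq _ hp

def starOpₗ (m : MvPowerSeries (Fin h) ℂ) :
    MvPolynomial (Fin h) ℂ →ₗ[ℂ] MvPolynomial (Fin h) ℂ where
  toFun := starOp m
  map_add' a b := eq_of_forall_pairing_eq fun p => by
    rw [pairing_starOp, pairing_add_left, pairing_add_left, pairing_starOp, pairing_starOp]
  map_smul' c a := eq_of_forall_pairing_eq fun p => by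
    rw [pairing_starOp, RingHom.id_apply, pairing_smul_left, pairing_smul_left, pairing_starOp]

@[simp]
theorem starOpₗ_apply (m : MvPowerSeries (Fin h) ℂ) (q : MvPolynomial (Fin h) ℂ) :
    starOpₗ m q = starOp m q := rfl

theorem pairing_homogeneousComponent (k : ℕ) (q : MvPolynomial (Fin h) ℂ)
    (p : MvPowerSeries (Fin h) ℂ) :
    pairing (homogeneousComponent k q) p = pairing q (MvPowerSeries.homogeneousComponent k p) := by
  classical
  rw [pairing_eq_sum_of_support_subset
    ((support_homogeneousComponent k q).trans_subset (Finset.filter_subset _ _)), pairing]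
  refine Finset.sum_congr rfl fun α _ => ?_
  rw [coeff_homogeneousComponent, MvPowerSeries.coeff_homogeneousComponent]
  split_ifs <;> simp

theorem MvPolynomial.IsHomogeneous.pairing_homogeneousComponent {q : MvPolynomial (Fin h) ℂ} {k : ℕ}
    (hq : q.IsHomogeneous k) (p : MvPowerSeries (Fin h) ℂ) :
    pairing q (MvPowerSeries.homogeneousComponent k p) = pairing q p := by
  rw [← _root_.pairing_homogeneousComponent, homogeneousComponent_eq_self hq]

theorem pairing_eq_zero_of_isHomogeneous {q : MvPolynomial (Fin h) ℂ}
    {p : MvPowerSeries (Fin h) ℂ} {k n : ℕ} (hq : q.IsHomogeneous k) (hp : p.IsHomogeneous n)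
    (hkn : k ≠ n) : pairing q p = 0 :=
  Finset.sum_eq_zero fun α hα => by
    have hα : α.degree = k := by
      rw [Finsupp.degree_eq_weight_one]
      exact hq (mem_support_iff.mp hα)
    rw [hp.coeff_eq_zero (hα ▸ hkn), mul_zero]

theorem starOp_isHomogeneous {m : MvPowerSeries (Fin h) ℂ} {q : MvPolynomial (Fin h) ℂ}
    {d e : ℕ} (hm : m.IsHomogeneous d) (hq : q.IsHomogeneous (e + d)) :
    (starOp m q).IsHomogeneous e := by
  intro γ hγ
  suffices γ.degree = e by rwa [Finsupp.degree_eq_weight_one] at this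
  by_contra hγe
  have hmono : (MvPowerSeries.monomial γ (1 : ℂ)).IsHomogeneous γ.degree := fun {δ} hδ => by
    rw [MvPowerSeries.coeff_monomial] at hδ
    split_ifs at hδ with hδγ
    · rw [hδγ, Finsupp.degree_eq_weight_one]
      rfl
    · exact absurd rfl hδ
  have hz := pairing_eq_zero_of_isHomogeneous hq (hm.mul hmono) (by omega)
  rw [← pairing_starOp, pairing_monomial_right] at hz
  exact hγ ((mul_eq_zero.mp hz).resolve_right (Nat.cast_ne_zero.mpr (mfact_ne_zero γ)))

end Pairing

section DegreeSlices

variable {h : ℕ}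

instance (k : ℕ) : FiniteDimensional ℂ (homogeneousSubmodule (Fin h) ℂ k) :=
  Submodule.finiteDimensional_of_le (S₂ := restrictTotalDegree (Fin h) ℂ k) fun _ hq =>
    (mem_restrictTotalDegree _ _ _).mpr (IsHomogeneous.totalDegree_le hq)

variable (h) in
def pairingForm : LinearMap.BilinForm ℂ (MvPolynomial (Fin h) ℂ) :=
  (pairingBilin h).compl₂ (coeToMvPowerSeries.algHom ℂ).toLinearMap

def degreeForm (k : ℕ) : LinearMap.BilinForm ℂ (homogeneousSubmodule (Fin h) ℂ k) :=
  (pairingForm h).restrict _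

theorem degreeForm_apply {k : ℕ} (q r : homogeneousSubmodule (Fin h) ℂ k) :
    degreeForm k q r = pairing q.1 r.1 := by
  simp [degreeForm, pairingForm, coeToMvPowerSeries.algHom_apply]

theorem degreeForm_isRefl (k : ℕ) : (degreeForm (h := h) k).IsRefl := fun q r hqr => by
  rwa [degreeForm_apply, pairing_coe_comm, ← degreeForm_apply]

theorem degreeForm_nondegenerate (k : ℕ) : (degreeForm (h := h) k).Nondegenerate := by
  refine (degreeForm_isRefl k).nondegenerate_iff_separatingLeft.mpr fun q hq => ?_
  refine Subtype.ext (MvPolynomial.ext _ _ fun α => ?_)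
  by_cases hα : α.degree = k
  · have := hq ⟨monomial α 1, isHomogeneous_monomial _ hα⟩
    rw [degreeForm_apply, coe_monomial, pairing_monomial_right] at this
    simpa [mfact_ne_zero] using this
  · exact (IsHomogeneous.coeff_eq_zero q.2 hα)

def degreeSlice (P : Ideal (MvPowerSeries (Fin h) ℂ)) (k : ℕ) :
    Submodule ℂ (homogeneousSubmodule (Fin h) ℂ k) :=
  (P.restrictScalars ℂ).comap
    ((coeToMvPowerSeries.algHom ℂ).toLinearMap ∘ₗ (homogeneousSubmodule (Fin h) ℂ k).subtype)

theorem mem_degreeSlice {P : Ideal (MvPowerSeries (Fin h) ℂ)} {k : ℕ}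
    {q : homogeneousSubmodule (Fin h) ℂ k} :
    q ∈ degreeSlice P k ↔ (q.1 : MvPowerSeries (Fin h) ℂ) ∈ P := by
  simp [degreeSlice, coeToMvPowerSeries.algHom_apply]

variable {P : Ideal (MvPowerSeries (Fin h) ℂ)}

theorem mem_perpOfPS_of_mem_orthogonal
    (hP : MvPowerSeries.IsHomogeneousIdeal P) {k : ℕ} {w : homogeneousSubmodule (Fin h) ℂ k}
    (hw : w ∈ (degreeForm k).orthogonal (degreeSlice P k)) :
    w.1 ∈ perpOfPS (P : Set (MvPowerSeries (Fin h) ℂ)) := by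
  intro p hp
  have hv := MvPowerSeries.coe_homogeneousComponent_truncTotal k p
  rw [← IsHomogeneous.pairing_homogeneousComponent w.2, ← hv, pairing_coe_comm,
    ← degreeForm_apply ⟨_, homogeneousComponent_mem k _⟩ w]
  exact hw _ (mem_degreeSlice.mpr (hv ▸ hP p hp k))

theorem mem_of_mem_perpOfPoly_perpOfPS
    (hP : MvPowerSeries.IsHomogeneousIdeal P) {p : MvPowerSeries (Fin h) ℂ}
    (hp : p ∈ perpOfPoly (perpOfPS (P : Set (MvPowerSeries (Fin h) ℂ)))) : p ∈ P := by
  refine MvPowerSeries.mem_of_forall_homogeneousComponent_mem fun k => ?_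
  have hv := MvPowerSeries.coe_homogeneousComponent_truncTotal k p
  suffices (⟨_, homogeneousComponent_mem k _⟩ : homogeneousSubmodule (Fin h) ℂ k) ∈
      degreeSlice P k by rwa [mem_degreeSlice, hv] at this
  rw [← (degreeForm k).orthogonal_orthogonal (degreeForm_nondegenerate k) (degreeForm_isRefl k)
    (degreeSlice P k)]
  intro w hw
  rw [degreeForm_apply, hv, IsHomogeneous.pairing_homogeneousComponent w.2]
  exact hp _ (mem_perpOfPS_of_mem_orthogonal hP hw)

theorem exists_mem_perpOfPS_starOp_eq
    (hP : MvPowerSeries.IsHomogeneousIdeal P)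
    {m : MvPowerSeries (Fin h) ℂ} {d e : ℕ} (hm : m.IsHomogeneous d)
    {r : MvPolynomial (Fin h) ℂ} (hr : r.IsHomogeneous e)
    (hrP : ∀ p, m * p ∈ P → pairing r p = 0) :
    ∃ q ∈ perpOfPS (P : Set (MvPowerSeries (Fin h) ℂ)), starOp m q = r := by
  set m₀ := homogeneousComponent d (MvPowerSeries.truncTotal (d + 1) m)
  have hm₀ : (m₀ : MvPowerSeries (Fin h) ℂ) = m := by
    rw [MvPowerSeries.coe_homogeneousComponent_truncTotal,
      ← MvPowerSeries.isHomogeneous_iff_eq_homogeneousComponent.mp hm]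
  let f : homogeneousSubmodule (Fin h) ℂ e →ₗ[ℂ] homogeneousSubmodule (Fin h) ℂ (e + d) :=
    (LinearMap.mulLeft ℂ m₀).restrict fun v hv =>
      add_comm d e ▸ (homogeneousComponent_isHomogeneous d _).mul hv
  let T : homogeneousSubmodule (Fin h) ℂ (e + d) →ₗ[ℂ] homogeneousSubmodule (Fin h) ℂ e :=
    (starOpₗ m).restrict fun w hw => starOp_isHomogeneous hm hw
  have hadj : ∀ w v, degreeForm e (T w) v = degreeForm (e + d) w (f v) := fun w v => by
    change pairing (starOp m w.1) v.1 = pairing w.1 ((m₀ * v.1 : MvPolynomial (Fin h) ℂ) : _)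
    rw [pairing_starOp, coe_mul, hm₀]
  have hr' : (⟨r, hr⟩ : homogeneousSubmodule (Fin h) ℂ e) ∈
      (degreeForm e).orthogonal ((degreeSlice P (e + d)).comap f) := fun v hv => by
    rw [degreeForm_apply, pairing_coe_comm]
    exact hrP _ (by simpa [mem_degreeSlice, f, hm₀] using hv)
  rw [LinearMap.BilinForm.orthogonal_comap_eq_map_orthogonal (degreeForm_nondegenerate e)
    (degreeForm_isRefl e) (degreeForm_nondegenerate (e + d)) (degreeForm_isRefl (e + d)) hadj]
    at hr'
  obtain ⟨w, hw, hwr⟩ := hr'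
  exact ⟨w, mem_perpOfPS_of_mem_orthogonal hP hw, congrArg Subtype.val hwr⟩

theorem mem_image_starOp_of_mem_perpOfPS_colon
    (hP : MvPowerSeries.IsHomogeneousIdeal P)
    {m : MvPowerSeries (Fin h) ℂ} {d : ℕ} (hm : m.IsHomogeneous d) {r : MvPolynomial (Fin h) ℂ}
    (hr : r ∈ perpOfPS {p | m * p ∈ P}) :
    r ∈ starOp m '' perpOfPS (P : Set (MvPowerSeries (Fin h) ℂ)) := by
  have hcomp : ∀ e p, m * p ∈ P → pairing (homogeneousComponent e r) p = 0 := fun e p hp => by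
    rw [pairing_homogeneousComponent]
    refine hr _ ?_
    change m * _ ∈ P
    rw [← MvPowerSeries.homogeneousComponent_add_mul_of_isHomogeneous hm]
    exact hP _ hp (e + d)
  choose q hqP hqr using fun e =>
    exists_mem_perpOfPS_starOp_eq hP hm (homogeneousComponent_isHomogeneous e r) (hcomp e)
  refine ⟨∑ e ∈ Finset.range (r.totalDegree + 1), q e, fun p hp => ?_, ?_⟩
  · rw [pairing_sum_left]
    exact Finset.sum_eq_zero fun e _ => hqP e p hp
  · rw [← starOpₗ_apply, map_sum]
    simp only [starOpₗ_apply, hqr]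
    exact sum_homogeneousComponent r

end DegreeSlices

/-- for a homogeneous ideal P and homogeneous m,
(m ⋆ P^⊥)^⊥ = P : m and m ⋆ P^⊥ = (P : m)^⊥. -/
theorem stmt11 (h : ℕ) (P : Ideal (MvPowerSeries (Fin h) ℂ))
    (hP : ∀ p ∈ P, ∀ k : ℕ,
      ((fun α => if (∑ i, α i) = k then MvPowerSeries.coeff α p else 0) :
        MvPowerSeries (Fin h) ℂ) ∈ P)
    (m : MvPowerSeries (Fin h) ℂ)
    (hm : ∃ d : ℕ, ∀ α : Fin h →₀ ℕ, (∑ i, α i) ≠ d → MvPowerSeries.coeff α m = 0) :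
    perpOfPoly (starOp m '' perpOfPS (P : Set (MvPowerSeries (Fin h) ℂ))) =
      {p : MvPowerSeries (Fin h) ℂ | m * p ∈ P} ∧
    starOp m '' perpOfPS (P : Set (MvPowerSeries (Fin h) ℂ)) =
      perpOfPS {p : MvPowerSeries (Fin h) ℂ | m * p ∈ P} := by
  obtain ⟨d, hd⟩ := hm
  have hm : m.IsHomogeneous d := fun {α} hα => by
    have := not_imp_comm.mp (hd α) hα
    rwa [← Finsupp.degree_eq_sum, Finsupp.degree_eq_weight_one] at this
  have hP' : MvPowerSeries.IsHomogeneousIdeal P := fun p hp k => by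
    have hcomp : MvPowerSeries.homogeneousComponent k p =
        fun α => if (∑ i, α i) = k then MvPowerSeries.coeff α p else 0 := by
      ext α
      rw [MvPowerSeries.coeff_homogeneousComponent, Finsupp.degree_eq_sum]
      rfl
    exact hcomp ▸ hP p hp k
  refine ⟨Set.ext fun p => ⟨fun hp => ?_, fun hp q hq => ?_⟩,
    Set.ext fun r => ⟨?_, mem_image_starOp_of_mem_perpOfPS_colon hP' hm⟩⟩
  · exact mem_of_mem_perpOfPoly_perpOfPS hP' fun q hq => pairing_starOp m q p ▸ hp _ ⟨q, hq, rfl⟩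
  · obtain ⟨q, hq, rfl⟩ := hq
    exact pairing_starOp_eq_zero hq hp
  · rintro ⟨q, hq, rfl⟩ p hp
    exact pairing_starOp_eq_zero hq hp
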